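/- Let χ(y) = Σ_{k=0}^n χ_k y^k with coefficients satisfying (-1)^{n-k} χ_k ≥ 1 for all 0 ≤ k ≤ n. Then for every t ≥ 0 and every 0 ≤ i ≤ n, the shifted Taylor coefficients K_i(t) defined by χ(y) = Σ_{i=0}^n K_i(t)(y+t)^i satisfy (-1)^{n-i} K_i(t) ≥ Σ_{k=i}^n binom(k,i) t^{k-i}. -/

import Mathlib

open Finset

/-- Corollary 1.4 (abstract form): if the coefficients of `χ(y) = ∑ₖ χₖ yᵏ` satisfy
`(-1)^(n-k) χₖ ≥ 1` for all `0 ≤ k ≤ n`, then for every `t ≥ 0` and `0 ≤ i ≤ n`, the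
shifted Taylor coefficients `K i` defined by `χ(y) = ∑ᵢ K i (y+t)^i` satisfy
`(-1)^(n-i) K i ≥ ∑_{k=i}^n C(k,i) t^(k-i)`. -/
theorem shifted_taylor_coeff_lower_bound (n : ℕ) (χ K : ℕ → ℝ) (t : ℝ) (ht : 0 ≤ t)
    (hχ : ∀ k ≤ n, (1 : ℝ) ≤ (-1 : ℝ) ^ (n - k) * χ k)
    (hK : ∀ y : ℝ, ∑ k ∈ Finset.range (n + 1), χ k * y ^ k =
      ∑ i ∈ Finset.range (n + 1), K i * (y + t) ^ i) :
    ∀ i ≤ n, (-1 : ℝ) ^ (n - i) * K i ≥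
      ∑ k ∈ Finset.Icc i n, (k.choose i : ℝ) * t ^ (k - i) := by
  set K' : ℕ → ℝ := fun i => ∑ k ∈ Finset.Icc i n, χ k * (k.choose i : ℝ) * (-t) ^ (k - i)
    with hK'def
  have key : ∀ i ≤ n, K i = K' i := by
    have hz : ∀ z : ℝ, ∑ i ∈ range (n+1), K i * z ^ i = ∑ i ∈ range (n+1), K' i * z ^ i := by
      intro z
      have h1 := hK (z - t)
      rw [sub_add_cancel] at h1
      rw [← h1]
      have hexp : ∀ k ∈ range (n+1), χ k * (z - t) ^ k
          = ∑ m ∈ range (n+1), χ k * (k.choose m : ℝ) * (-t) ^ (k - m) * z ^ m := by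
        intro k hk
        rw [mem_range, Nat.lt_succ_iff] at hk
        have h2 : (z - t) ^ k = (z + (-t)) ^ k := by ring_nf
        rw [h2, add_pow, Finset.mul_sum,
          ← Finset.sum_subset (Finset.range_subset_range.2 (Nat.succ_le_succ hk))]
        · exact Finset.sum_congr rfl fun m _ => by ring
        · intro m _ hm2
          rw [mem_range, Nat.lt_succ_iff, not_le] at hm2
          simp [Nat.choose_eq_zero_of_lt hm2]
      rw [Finset.sum_congr rfl hexp, Finset.sum_comm]
      refine Finset.sum_congr rfl fun m hm => ?_
      rw [mem_range, Nat.lt_succ_iff] at hm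
      rw [hK'def]
      simp only
      rw [Finset.sum_mul]
      have hsub : Finset.Icc m n ⊆ range (n+1) := by
        intro k hk
        rw [Finset.mem_Icc] at hk
        rw [mem_range, Nat.lt_succ_iff]
        exact hk.2
      rw [← Finset.sum_subset hsub]
      · intro k hk hk2
        rw [mem_range, Nat.lt_succ_iff] at hk
        rw [Finset.mem_Icc, not_and] at hk2
        have : k < m := by omega
        simp [Nat.choose_eq_zero_of_lt this]
    intro i hi
    have hp : (∑ j ∈ range (n+1), (Polynomial.C (K j) * Polynomial.X ^ j : Polynomial ℝ)) =
              (∑ j ∈ range (n+1), (Polynomial.C (K' j) * Polynomial.X ^ j)) := by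
      apply Polynomial.funext
      intro z
      simpa [Polynomial.eval_finset_sum] using hz z
    have hc := congrArg (fun p => Polynomial.coeff p i) hp
    simpa [Polynomial.finset_sum_coeff, Polynomial.coeff_C_mul, Polynomial.coeff_X_pow,
      Finset.sum_ite_eq', Nat.lt_succ_iff, hi] using hc
  intro i hi
  rw [key i hi, hK'def]
  simp only
  rw [Finset.mul_sum, ge_iff_le]
  apply Finset.sum_le_sum
  intro k hk
  rw [Finset.mem_Icc] at hk
  have hpow : (-1:ℝ)^(n-i) * ((-t)^(k-i)) = (-1:ℝ)^(n-k) * t^(k-i) := by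
    rw [neg_pow t]
    have h3 : n - i = (n - k) + (k - i) := by omega
    rw [h3, pow_add]; ring_nf; rw [mul_comm (k - i) 2, pow_mul, neg_one_sq, one_pow, mul_one]
  have : (-1:ℝ)^(n-i) * (χ k * (k.choose i : ℝ) * (-t)^(k-i))
      = ((k.choose i : ℝ) * t^(k-i)) * ((-1:ℝ)^(n-k) * χ k) := by
    rw [show (-1:ℝ)^(n-i) * (χ k * (k.choose i : ℝ) * (-t)^(k-i))
        = ((-1:ℝ)^(n-i) * ((-t)^(k-i))) * (χ k * (k.choose i : ℝ)) by ring, hpow]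
    ring
  rw [this]
  have hnn : (0:ℝ) ≤ (k.choose i : ℝ) * t^(k-i) :=
    mul_nonneg (Nat.cast_nonneg _) (pow_nonneg ht _)
  exact le_mul_of_one_le_right hnn (hχ k hk.2)
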